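/- Let U be a 3×3 orthogonal matrix, W_h ∈ ℝ^{h×ν}, W_μ ∈ ℝ^{μ×h}, and σ⁺ : ℝ → ℝ any function. Define V' (V) ∈ ℝ^{μ×3} by scaling each row of W_μ·W_h·V by σ⁺ applied to that row's Euclidean norm. Then V'(V·U) = V'(V)·U, i.e., the vector output of a geometric vector perceptron is equivariant under rotations and reflections. -/
import Mathlib


open Matrix

noncomputable def rowNorm (v : Fin 3 → ℝ) : ℝ := Real.sqrt (∑ j, v j ^ 2)

lemma rowNormInvAux (U : Matrix (Fin 3) (Fin 3) ℝ) (hU : U * Uᵀ = 1) (x : Fin 3 → ℝ) :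
    ∑ j, (∑ k, x k * U k j) ^ 2 = ∑ j, x j ^ 2 := by
  have h : ∀ k l, ∑ j, U k j * U l j = (1 : Matrix (Fin 3) (Fin 3) ℝ) k l := by
    intro k l
    rw [← hU]
    simp [Matrix.mul_apply, Matrix.transpose_apply]
  calc ∑ j, (∑ k, x k * U k j) ^ 2
      = ∑ j, ∑ k, ∑ l, (x k * x l) * (U k j * U l j) := by
        apply Finset.sum_congr rfl; intro j _
        rw [sq, Finset.sum_mul_sum]
        apply Finset.sum_congr rfl; intro k _
        apply Finset.sum_congr rfl; intro l _
        ring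
    _ = ∑ k, ∑ l, (x k * x l) * ∑ j, U k j * U l j := by
        rw [Finset.sum_comm]
        apply Finset.sum_congr rfl; intro k _
        rw [Finset.sum_comm]
        apply Finset.sum_congr rfl; intro l _
        rw [Finset.mul_sum]
    _ = ∑ j, x j ^ 2 := by
        simp only [h, Matrix.one_apply]
        simp [Finset.sum_ite_eq', sq]

theorem stmt1 (ν h μ : ℕ) (U : Matrix (Fin 3) (Fin 3) ℝ) (hU : U * Uᵀ = 1)
    (Wh : Matrix (Fin h) (Fin ν) ℝ) (Wμ : Matrix (Fin μ) (Fin h) ℝ)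
    (σp : ℝ → ℝ)
    (V' : Matrix (Fin ν) (Fin 3) ℝ → Matrix (Fin μ) (Fin 3) ℝ)
    (hV' : ∀ V i j, V' V i j = σp (rowNorm ((Wμ * Wh * V) i)) * (Wμ * Wh * V) i j) :
    ∀ V, V' (V * U) = V' V * U := by
  intro V
  ext i j
  rw [hV']
  have hassoc : Wμ * Wh * (V * U) = (Wμ * Wh * V) * U := by simp [Matrix.mul_assoc]
  rw [hassoc]
  have hnorm : rowNorm (((Wμ * Wh * V) * U) i) = rowNorm ((Wμ * Wh * V) i) := by
    unfold rowNorm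
    congr 1
    simpa [Matrix.mul_apply] using rowNormInvAux U hU ((Wμ * Wh * V) i)
  rw [hnorm, Matrix.mul_apply]
  simp only [hV', Matrix.mul_apply, Finset.mul_sum]
  apply Finset.sum_congr rfl; intro k _
  simp only [mul_assoc, ← Finset.mul_sum]
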